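/- arXiv:1301.1794 — 3 statements merged into one kernel-verified Lean document; each statement's English description precedes it below -/
import Mathlib

section
/- A semisymmetric graph (a regular graph that is edge-transitive but not vertex-transitive) is bipartite, with both parts of the bipartition having equal size. -/
open Finset

lemma count_aux {V : Type*} [Fintype V] (G : SimpleGraph V) [DecidableRel G.Adj]
    (d : ℕ) (hreg : G.IsRegularOfDegree d) (S : Set V) [DecidablePred (· ∈ S)]
    (h : ∀ v w, G.Adj v w → (v ∈ S ↔ w ∉ S)) :
    d * S.toFinset.card = G.edgeFinset.card := by
  classical
  have h1 : d * S.toFinset.card = ∑ v ∈ S.toFinset, G.degree v := by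
    rw [Finset.sum_congr rfl fun v _ => hreg v, Finset.sum_const, smul_eq_mul, mul_comm]
  have h2 : (Finset.univ.filter fun dd : G.Dart => dd.fst ∈ S).card
      = ∑ v ∈ S.toFinset, G.degree v := by
    rw [Finset.card_eq_sum_card_fiberwise
      (f := fun dd : G.Dart => dd.fst) (t := S.toFinset)
      (fun dd hdd => by simpa using (Finset.mem_filter.mp hdd).2)]
    refine Finset.sum_congr rfl fun v hv => ?_
    rw [← SimpleGraph.dart_fst_fiber_card_eq_degree]
    congr 1
    ext dd
    simp only [Finset.mem_filter, Finset.mem_univ, true_and]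
    constructor
    · rintro ⟨_, rfl⟩; rfl
    · rintro rfl; exact ⟨by simpa using hv, rfl⟩
  have h3 : (Finset.univ.filter fun dd : G.Dart => dd.fst ∈ S).card = G.edgeFinset.card := by
    apply Finset.card_bij (fun dd _ => dd.edge)
    · intro dd _; rw [SimpleGraph.mem_edgeFinset]; exact dd.edge_mem
    · intro d1 hd1 d2 hd2 he
      rcases (SimpleGraph.dart_edge_eq_iff d1 d2).mp he with rfl | rfl
      · rfl
      · exfalso
        have h1' : d2.snd ∈ S := by simpa using (Finset.mem_filter.mp hd1).2
        have h2' : d2.fst ∈ S := by simpa using (Finset.mem_filter.mp hd2).2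
        exact (h d2.fst d2.snd d2.adj).mp h2' h1'
    · intro e he
      rw [SimpleGraph.mem_edgeFinset] at he
      induction e with
      | h x y =>
        have hadj : G.Adj x y := he
        by_cases hx : x ∈ S
        · exact ⟨⟨(x, y), hadj⟩, Finset.mem_filter.mpr ⟨Finset.mem_univ _, hx⟩, rfl⟩
        · have hy : y ∈ S := by
            by_contra hy
            exact hy ((h x y hadj).not.mp (by simpa using hx) |> not_not.mp)
          exact ⟨⟨(y, x), hadj.symm⟩, Finset.mem_filter.mpr ⟨Finset.mem_univ _, hy⟩,
            Sym2.eq_swap⟩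
  omega

theorem semisymmetric_bipartite_equal_parts' {V : Type*} [Fintype V] (G : SimpleGraph V) [DecidableRel G.Adj]
    (d : ℕ) (hd : 0 < d) (hreg : G.IsRegularOfDegree d)
    (hET : ∀ e₁ ∈ G.edgeSet, ∀ e₂ ∈ G.edgeSet, ∃ φ : G ≃g G, e₁.map ⇑φ = e₂)
    (hNVT : ¬ ∀ v w : V, ∃ φ : G ≃g G, φ v = w) :
    ∃ A B : Set V, A ∪ B = Set.univ ∧ Disjoint A B ∧ A.ncard = B.ncard ∧
      ∀ v w : V, G.Adj v w → (v ∈ A ∧ w ∈ B) ∨ (v ∈ B ∧ w ∈ A) := by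
  classical
  -- there is a vertex
  have hV : Nonempty V := by
    by_contra h
    exact hNVT fun v w => absurd ⟨v⟩ h
  obtain ⟨a⟩ := hV
  -- a has a neighbor
  have hdeg : 0 < G.degree a := hreg a ▸ hd
  obtain ⟨b, hab⟩ : ∃ b, G.Adj a b := by
    obtain ⟨b, hb⟩ := Finset.card_pos.mp hdeg
    exact ⟨b, (G.mem_neighborFinset a b).mp hb⟩
  set A : Set V := {v | ∃ φ : G ≃g G, φ a = v} with hA
  set B : Set V := {v | ∃ φ : G ≃g G, φ b = v} with hB
  -- key: every edge has one end in A and one in B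
  have hedge : ∀ v w : V, G.Adj v w → (v ∈ A ∧ w ∈ B) ∨ (v ∈ B ∧ w ∈ A) := by
    intro v w hvw
    obtain ⟨φ, hφ⟩ := hET s(v, w) hvw s(a, b) hab
    rw [Sym2.map_pair_eq, Sym2.eq_iff] at hφ
    rcases hφ with ⟨h1, h2⟩ | ⟨h1, h2⟩
    · exact Or.inl ⟨⟨φ.symm, by rw [← h1, φ.symm_apply_apply]⟩,
        ⟨φ.symm, by rw [← h2, φ.symm_apply_apply]⟩⟩
    · exact Or.inr ⟨⟨φ.symm, by rw [← h1, φ.symm_apply_apply]⟩,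
        ⟨φ.symm, by rw [← h2, φ.symm_apply_apply]⟩⟩
  -- union is everything
  have hunion : A ∪ B = Set.univ := by
    ext v
    simp only [Set.mem_union, Set.mem_univ, iff_true]
    have hdegv : 0 < G.degree v := hreg v ▸ hd
    obtain ⟨w, hw⟩ := Finset.card_pos.mp hdegv
    have hvw : G.Adj v w := (G.mem_neighborFinset v w).mp hw
    rcases hedge v w hvw with ⟨h1, _⟩ | ⟨h1, _⟩
    · exact Or.inl h1
    · exact Or.inr h1
  -- disjoint
  have hdisj : Disjoint A B := by
    rw [Set.disjoint_left]
    rintro v ⟨φ, hφ⟩ ⟨ψ, hψ⟩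
    apply hNVT
    have horb : ∀ x : V, ∃ χ : G ≃g G, χ a = x := by
      intro x
      have hx : x ∈ A ∪ B := hunion ▸ Set.mem_univ x
      rcases hx with ⟨χ, hχ⟩ | ⟨β, hβ⟩
      · exact ⟨χ, hχ⟩
      · refine ⟨(φ.trans ψ.symm).trans β, ?_⟩
        have hb' : ψ.symm (φ a) = b := by rw [hφ, ← hψ, ψ.symm_apply_apply]
        simp only [RelIso.trans_apply]
        rw [hb', hβ]
    intro x y
    obtain ⟨χx, hχx⟩ := horb x
    obtain ⟨χy, hχy⟩ := horb y
    refine ⟨χx.symm.trans χy, ?_⟩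
    simp only [RelIso.trans_apply]
    rw [← hχx, χx.symm_apply_apply, hχy]
  -- equal cardinalities via double counting
  have hAcond : ∀ v w, G.Adj v w → (v ∈ A ↔ w ∉ A) := by
    intro v w hvw
    constructor
    · intro hv
      rcases hedge v w hvw with ⟨_, hwB⟩ | ⟨hvB, _⟩
      · exact Set.disjoint_left.mp hdisj.symm hwB
      · exact absurd hv (Set.disjoint_left.mp hdisj.symm hvB)
    · intro hw
      rcases hedge v w hvw with ⟨hv, _⟩ | ⟨_, hwA⟩
      · exact hv
      · exact absurd hwA hw
  have hBcond : ∀ v w, G.Adj v w → (v ∈ B ↔ w ∉ B) := by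
    intro v w hvw
    constructor
    · intro hv
      rcases hedge v w hvw with ⟨hvA, _⟩ | ⟨_, hwA⟩
      · exact absurd hv (Set.disjoint_left.mp hdisj hvA)
      · exact Set.disjoint_left.mp hdisj hwA
    · intro hw
      rcases hedge v w hvw with ⟨_, hwB⟩ | ⟨hvB, _⟩
      · exact absurd hwB hw
      · exact hvB
  have hcA := count_aux G d hreg A hAcond
  have hcB := count_aux G d hreg B hBcond
  have hcard : A.toFinset.card = B.toFinset.card :=
    Nat.eq_of_mul_eq_mul_left hd (by omega)
  refine ⟨A, B, hunion, hdisj, ?_, hedge⟩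
  rw [Set.ncard_eq_toFinset_card', Set.ncard_eq_toFinset_card', hcard]

/-- A graph `G` is edge-transitive if its automorphism group acts transitively on edges. -/
def EdgeTransitive {V : Type*} (G : SimpleGraph V) : Prop :=
  ∀ e₁ ∈ G.edgeSet, ∀ e₂ ∈ G.edgeSet, ∃ φ : G ≃g G, e₁.map ⇑φ = e₂

/-- A graph `G` is vertex-transitive if its automorphism group acts transitively on vertices. -/
def VertexTransitive {V : Type*} (G : SimpleGraph V) : Prop :=
  ∀ v w : V, ∃ φ : G ≃g G, φ v = w

/-- A semisymmetric graph (regular of positive degree, edge-transitive, not vertex-transitive)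
is bipartite, with both parts of the bipartition having equal size. -/
theorem semisymmetric_bipartite_equal_parts {V : Type*} [Fintype V] (G : SimpleGraph V) [DecidableRel G.Adj]
    (d : ℕ) (hd : 0 < d) (hreg : G.IsRegularOfDegree d)
    (hET : EdgeTransitive G) (hNVT : ¬ VertexTransitive G) :
    ∃ A B : Set V, A ∪ B = Set.univ ∧ Disjoint A B ∧ A.ncard = B.ncard ∧
      ∀ v w : V, G.Adj v w → (v ∈ A ∧ w ∈ B) ∨ (v ∈ B ∧ w ∈ A) := by
  exact semisymmetric_bipartite_equal_parts' G d hd hreg hET hNVT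
end

section
/- Let K be a q-arc in PG(n,q) with n ≥ 3 and q ≥ 2n+2, and let P₁, P₂ ∈ K. For each of the q−n−1 points R of K distinct from a fixed set {P₁,...,P_{n+1}} of n+1 points of K, the hyperplane spanned by P₃,...,P_{n+1},R meets the line P₁P₂ in a point, and these q−n−1 intersection points are pairwise distinct and all different from P₁ and P₂. Hence the line P₁P₂ contains at least q−n−1 ≥ q/2 points of the closure of K other than P₁, P₂. -/
open scoped LinearAlgebra.Projectivization

variable {F : Type*} [Field F] {n : ℕ}

/-- A point set `K` of a projective space `PG(n,q)` is an arc if it has at least `n+1` points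
and no `n+1` of its points lie on a hyperplane, i.e. every `n+1` of its points span. -/
def IsArc {F V : Type*} [Field F] [AddCommGroup V] [Module F V] (n : ℕ) (K : Set (ℙ F V)) :
    Prop :=
  n + 1 ≤ K.ncard ∧
    ∀ S : Finset (ℙ F V), ↑S ⊆ K → S.card = n + 1 → (⨆ p ∈ S, p.submodule) = ⊤

/-- A set `T` of projective points is closed under taking intersection points: whenever two
subspaces spanned by points of `T` intersect in exactly one projective point, that point
belongs to `T`. -/
def ClosedUnderMeets {F V : Type*} [Field F] [AddCommGroup V] [Module F V]
    (T : Set (ℙ F V)) : Prop :=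
  ∀ A B : Set (ℙ F V), A ⊆ T → B ⊆ T → ∀ x : ℙ F V,
    (⨆ p ∈ A, p.submodule) ⊓ (⨆ p ∈ B, p.submodule) = x.submodule → x ∈ T

/-- The closure of a set `S` of projective points: the smallest set containing `S` that is
closed under adding the intersection point of any two spanned subspaces meeting in exactly
one point. -/
def ptClosure {F V : Type*} [Field F] [AddCommGroup V] [Module F V] (S : Set (ℙ F V)) :
    Set (ℙ F V) :=
  ⋂₀ {T | S ⊆ T ∧ ClosedUnderMeets T}

open Submodule Module Set Function

private lemma finrank_span_image_finset {F W : Type*} [Field F] [AddCommGroup W] [Module F W]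
    {m : ℕ} {v : Fin m → W} (hv : LinearIndependent F v) (s : Finset (Fin m)) :
    finrank F (span F (v '' ↑s)) = s.card := by
  have h1 : LinearIndependent F (fun i : (↑s : Set (Fin m)) => v ↑i) :=
    hv.comp _ Subtype.coe_injective
  have h2 : (Set.range fun i : (↑s : Set (Fin m)) => v ↑i) = v '' ↑s := by
    ext x; simp
  rw [← h2, finrank_span_eq_card h1, ← Nat.card_eq_fintype_card, Nat.card_coe_set_eq,
    Set.ncard_coe_finset]

private lemma arc_span_top {F : Type*} [Field F] {n : ℕ} {K : Set (ℙ F (Fin (n+1) → F))}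
    (hK : IsArc n K) (f : Fin (n+1) → ℙ F (Fin (n+1) → F)) (hf : Function.Injective f)
    (hfK : ∀ i, f i ∈ K) :
    Submodule.span F (Set.range fun i => (f i).rep) = ⊤ := by
  classical
  have h := hK.2 (Finset.image f Finset.univ)
    (by intro p hp
        simp only [Finset.coe_image, Finset.coe_univ, Set.image_univ, Set.mem_range] at hp
        obtain ⟨i, rfl⟩ := hp; exact hfK i)
    (by rw [Finset.card_image_of_injective _ hf, Finset.card_univ, Fintype.card_fin])
  rw [← h]
  have h2 : (⨆ p ∈ Finset.image f Finset.univ, p.submodule)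
      = ⨆ p ∈ Set.range f, Projectivization.submodule p := by
    apply le_antisymm
    · refine iSup₂_le fun p hp => ?_
      simp only [Finset.mem_image, Finset.mem_univ, true_and] at hp
      obtain ⟨i, rfl⟩ := hp
      exact le_iSup₂ (f := fun p (_ : p ∈ Set.range f) => Projectivization.submodule p)
        (f i) ⟨i, rfl⟩
    · refine iSup₂_le fun p hp => ?_
      obtain ⟨i, rfl⟩ := hp
      exact le_iSup₂ (f := fun p (_ : p ∈ Finset.image f Finset.univ) =>
        Projectivization.submodule p) (f i) (Finset.mem_image_of_mem f (Finset.mem_univ i))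
  rw [h2, iSup_range]
  simp_rw [Projectivization.submodule_eq]
  rw [← Submodule.span_range_eq_iSup]

private lemma arc_indep {F : Type*} [Field F] {n : ℕ} {K : Set (ℙ F (Fin (n+1) → F))}
    (hK : IsArc n K) (f : Fin (n+1) → ℙ F (Fin (n+1) → F)) (hf : Function.Injective f)
    (hfK : ∀ i, f i ∈ K) : LinearIndependent F (fun i => (f i).rep) := by
  apply linearIndependent_of_top_le_span_of_card_eq_finrank
  · rw [arc_span_top hK f hf hfK]
  · rw [Fintype.card_fin, Module.finrank_fin_fun F]

private lemma update_injective {α β : Type*} [DecidableEq α] {P : α → β}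
    (hP : Function.Injective P) {R : β} (hR : R ∉ Set.range P) (k : α) :
    Function.Injective (Function.update P k R) := by
  intro i j h
  by_cases hi : i = k <;> by_cases hj : j = k
  · rw [hi, hj]
  · subst hi
    rw [Function.update_self, Function.update_of_ne hj] at h
    exact absurd ⟨j, h.symm⟩ hR
  · subst hj
    rw [Function.update_of_ne hi, Function.update_self] at h
    exact absurd ⟨i, h⟩ hR
  · rw [Function.update_of_ne hi, Function.update_of_ne hj] at h
    exact hP h

private lemma range_update_subset {α β : Type*} [DecidableEq α] (P : α → β) (k : α) (R : β) :
    Set.range (Function.update P k R) ⊆ insert R (Set.range P) := by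
  rintro x ⟨i, rfl⟩
  rcases eq_or_ne i k with rfl | hi
  · rw [Function.update_self]; exact Set.mem_insert _ _
  · rw [Function.update_of_ne hi]; exact Set.mem_insert_of_mem _ ⟨i, rfl⟩

/-- The affine "hyperplane set of vectors": the representatives of `P 2, …, P n` and of `R`. -/
private def Eset {F : Type*} [Field F] {n : ℕ} (P : Fin (n + 1) → ℙ F (Fin (n + 1) → F))
    (R : ℙ F (Fin (n + 1) → F)) : Set (Fin (n + 1) → F) :=
  insert R.rep ((fun i => (P i).rep) '' {i : Fin (n + 1) | 2 ≤ (i : ℕ)})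

/-- The hyperplane spanned by `P 2, …, P n` and `R`. -/
private def Hsub {F : Type*} [Field F] {n : ℕ} (P : Fin (n + 1) → ℙ F (Fin (n + 1) → F))
    (R : ℙ F (Fin (n + 1) → F)) : Submodule F (Fin (n + 1) → F) :=
  span F (Eset P R)

/-- Let `K` be a `q`-arc in `PG(n,q)` with `n ≥ 3` and `q ≥ 2n+2`, and let `P 0, ..., P n` be
`n+1` points of `K`, with `P₁ = P 0` and `P₂ = P 1`.  For each of the `q-n-1` points `R` of
`K` outside `{P 0, ..., P n}`, the hyperplane spanned by `P 2, ..., P n, R` meets the line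
`P₁P₂` in a point; these points are pairwise distinct, different from `P₁` and `P₂`, and lie
in the closure of `K`.  Hence the line `P₁P₂` contains at least `q-n-1 ≥ q/2` points of the
closure of `K` other than `P₁, P₂`. -/
theorem arc_closure_points_on_line [Fintype F] {q : ℕ} (hq : Fintype.card F = q)
    (hn : 3 ≤ n) (hqn : 2 * n + 2 ≤ q) (K : Set (ℙ F (Fin (n + 1) → F)))
    (hK : IsArc n K) (hKcard : K.ncard = q)
    (P : Fin (n + 1) → ℙ F (Fin (n + 1) → F)) (hPinj : Function.Injective P)
    (hPK : ∀ i, P i ∈ K) :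
    (∃ g : {R : ℙ F (Fin (n + 1) → F) // R ∈ K ∧ R ∉ Set.range P} → ℙ F (Fin (n + 1) → F),
      Function.Injective g ∧
        ∀ R, ((g R).submodule =
            ((⨆ i : {i : Fin (n + 1) // 2 ≤ (i : ℕ)}, (P i).submodule) ⊔ R.1.submodule) ⊓
              ((P 0).submodule ⊔ (P 1).submodule) ∧
          g R ≠ P 0 ∧ g R ≠ P 1 ∧ g R ∈ ptClosure K)) ∧
    q - n - 1 ≤ {x | x ∈ ptClosure K ∧ x.submodule ≤ (P 0).submodule ⊔ (P 1).submodule ∧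
        x ≠ P 0 ∧ x ≠ P 1}.ncard ∧
    q / 2 ≤ q - n - 1 := by
  classical
  haveI hfinP : Finite (ℙ F (Fin (n + 1) → F)) := Quotient.finite _
  have hval1 : ((1 : Fin (n + 1)) : ℕ) = 1 := by
    rw [Fin.val_one', Nat.mod_eq_of_lt (by omega)]
  have h01 : (0 : Fin (n + 1)) ≠ 1 := by
    intro h
    have h' := congrArg Fin.val h
    rw [Fin.val_zero, hval1] at h'
    omega
  have h2le : ∀ i : Fin (n + 1), i ≠ 0 → i ≠ 1 → 2 ≤ (i : ℕ) := by
    intro i h0 h1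
    have w0 : (i : ℕ) ≠ 0 := fun hw => h0 (Fin.ext (by rw [hw, Fin.val_zero]))
    have w1 : (i : ℕ) ≠ 1 := fun hw => h1 (by rw [Fin.ext_iff, hval1]; exact hw)
    omega
  have hne0of2 : ∀ i : Fin (n + 1), 2 ≤ (i : ℕ) → i ≠ 0 := by
    rintro i hi rfl; simp at hi
  have hne1of2 : ∀ i : Fin (n + 1), 2 ≤ (i : ℕ) → i ≠ 1 := by
    rintro i hi rfl; rw [hval1] at hi; omega
  have hVrank : finrank F (Fin (n + 1) → F) = n + 1 := Module.finrank_fin_fun F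
  have hvind : LinearIndependent F (fun i => (P i).rep) := arc_indep hK P hPinj hPK
  have hLspan : (P 0).submodule ⊔ (P 1).submodule
      = span F ((fun i => (P i).rep) '' ({0, 1} : Set (Fin (n + 1)))) := by
    rw [Set.image_pair, Submodule.span_insert,
      Projectivization.submodule_eq (P 0), Projectivization.submodule_eq (P 1)]
  have hLrank : finrank F ↥((P 0).submodule ⊔ (P 1).submodule) = 2 := by
    have hcoe : ((({0, 1} : Finset (Fin (n + 1))) : Set (Fin (n + 1)))) = ({0, 1} : Set _) := by
      simp
    rw [hLspan, ← hcoe, finrank_span_image_finset hvind,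
      Finset.card_insert_of_notMem (by simp [h01]), Finset.card_singleton]
  have hupdmem : ∀ (R : {R // R ∈ K ∧ R ∉ Set.range P}) (k : Fin (n + 1)) (i : Fin (n + 1)),
      Function.update P k R.1 i ∈ K := by
    intro R k i
    rcases eq_or_ne i k with rfl | hi
    · rw [Function.update_self]; exact R.2.1
    · rw [Function.update_of_ne hi]; exact hPK i
  -- `Eset` as image of the family `update P 1 R`
  have hEimg1 : ∀ R : {R // R ∈ K ∧ R ∉ Set.range P},
      Eset P R.1 = (fun i => ((Function.update P 1 R.1) i).rep) '' {i | i ≠ 0} := by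
    intro R; ext x
    simp only [Eset, Set.mem_insert_iff, Set.mem_image, Set.mem_setOf_eq]
    constructor
    · rintro (rfl | ⟨i, hi, rfl⟩)
      · exact ⟨1, fun h => h01 h.symm, by rw [Function.update_self]⟩
      · exact ⟨i, hne0of2 i hi, by rw [Function.update_of_ne (hne1of2 i hi)]⟩
    · rintro ⟨i, hi0, rfl⟩
      rcases eq_or_ne i 1 with rfl | hi1
      · left; rw [Function.update_self]
      · right; exact ⟨i, h2le i hi0 hi1, by rw [Function.update_of_ne hi1]⟩
  -- `Eset` as image of the family `update P 0 R`
  have hEimg0 : ∀ R : {R // R ∈ K ∧ R ∉ Set.range P},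
      Eset P R.1 = (fun i => ((Function.update P 0 R.1) i).rep) '' {i | i ≠ 1} := by
    intro R; ext x
    simp only [Eset, Set.mem_insert_iff, Set.mem_image, Set.mem_setOf_eq]
    constructor
    · rintro (rfl | ⟨i, hi, rfl⟩)
      · exact ⟨0, h01, by rw [Function.update_self]⟩
      · exact ⟨i, hne1of2 i hi, by rw [Function.update_of_ne (hne0of2 i hi)]⟩
    · rintro ⟨i, hi1, rfl⟩
      rcases eq_or_ne i 0 with rfl | hi0
      · left; rw [Function.update_self]
      · right; exact ⟨i, h2le i hi0 hi1, by rw [Function.update_of_ne hi0]⟩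
  have hHrank : ∀ R : {R // R ∈ K ∧ R ∉ Set.range P}, finrank F ↥(Hsub P R.1) = n := by
    intro R
    have hinj : Function.Injective (Function.update P 1 R.1) :=
      update_injective hPinj R.2.2 1
    have hind := arc_indep hK _ hinj (hupdmem R 1)
    have hcoe : ((Finset.univ.erase (0 : Fin (n + 1)) : Finset _) : Set (Fin (n + 1)))
        = {i | i ≠ 0} := by ext i; simp
    rw [Hsub, hEimg1 R, ← hcoe, finrank_span_image_finset hind,
      Finset.card_erase_of_mem (Finset.mem_univ _), Finset.card_univ, Fintype.card_fin,
      Nat.add_sub_cancel]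
  have hv0H : ∀ R : {R // R ∈ K ∧ R ∉ Set.range P}, (P 0).rep ∉ Hsub P R.1 := by
    intro R
    have hinj := update_injective hPinj R.2.2 1
    have hind := arc_indep hK _ hinj (hupdmem R 1)
    have h0 : (Function.update P 1 R.1 0).rep = (P 0).rep := by
      rw [Function.update_of_ne h01]
    rw [Hsub, hEimg1 R, ← h0]
    exact hind.notMem_span_image (by simp)
  have hv1H : ∀ R : {R // R ∈ K ∧ R ∉ Set.range P}, (P 1).rep ∉ Hsub P R.1 := by
    intro R
    have hinj := update_injective hPinj R.2.2 0
    have hind := arc_indep hK _ hinj (hupdmem R 0)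
    have h1 : (Function.update P 0 R.1 1).rep = (P 1).rep := by
      rw [Function.update_of_ne h01.symm]
    rw [Hsub, hEimg0 R, ← h1]
    exact hind.notMem_span_image (by simp)
  have hv0L : (P 0).rep ∈ (P 0).submodule ⊔ (P 1).submodule :=
    Submodule.mem_sup_left
      (by rw [Projectivization.submodule_eq]; exact Submodule.mem_span_singleton_self _)
  have hv1L : (P 1).rep ∈ (P 0).submodule ⊔ (P 1).submodule :=
    Submodule.mem_sup_right
      (by rw [Projectivization.submodule_eq]; exact Submodule.mem_span_singleton_self _)
  have hHtop : ∀ R : {R // R ∈ K ∧ R ∉ Set.range P},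
      Hsub P R.1 ⊔ ((P 0).submodule ⊔ (P 1).submodule) = ⊤ := by
    intro R
    rw [eq_top_iff, ← arc_span_top hK P hPinj hPK]
    apply Submodule.span_le.2
    rintro x ⟨i, rfl⟩
    rcases eq_or_ne i 0 with rfl | h0
    · exact Submodule.mem_sup_right hv0L
    rcases eq_or_ne i 1 with rfl | h1
    · exact Submodule.mem_sup_right hv1L
    · exact Submodule.mem_sup_left
        (Submodule.subset_span (Set.mem_insert_of_mem _ ⟨i, h2le i h0 h1, rfl⟩))
  have hbsup : (⨆ i ∈ {i : Fin (n + 1) | 2 ≤ (i : ℕ)}, (P i).submodule)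
      = span F ((fun i => (P i).rep) '' {i : Fin (n + 1) | 2 ≤ (i : ℕ)}) := by
    have himg : (fun i => (P i).rep) '' {i : Fin (n + 1) | 2 ≤ (i : ℕ)}
        = ⋃ i ∈ {i : Fin (n + 1) | 2 ≤ (i : ℕ)}, {(P i).rep} := by
      ext x
      simp only [Set.mem_image, Set.mem_setOf_eq, Set.mem_iUnion, Set.mem_singleton_iff]
      exact ⟨fun ⟨i, hi, h⟩ => ⟨i, hi, h.symm⟩, fun ⟨i, hi, h⟩ => ⟨i, hi, h.symm⟩⟩
    rw [himg, Submodule.span_iUnion₂]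
    exact iSup_congr fun i => iSup_congr fun _ => (Projectivization.submodule_eq (P i))
  have hsup2 : (⨆ i : {i : Fin (n + 1) // 2 ≤ (i : ℕ)}, (P i).submodule)
      = span F ((fun i => (P i).rep) '' {i : Fin (n + 1) | 2 ≤ (i : ℕ)}) :=
    (iSup_subtype).trans hbsup
  have hH1 : ∀ R : {R // R ∈ K ∧ R ∉ Set.range P},
      ((⨆ i : {i : Fin (n + 1) // 2 ≤ (i : ℕ)}, (P i).submodule) ⊔ R.1.submodule)
        = Hsub P R.1 := by
    intro R
    rw [hsup2, Hsub, Eset, Submodule.span_insert, Projectivization.submodule_eq, sup_comm]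
  -- choose the intersection point
  have key : ∀ R : {R // R ∈ K ∧ R ∉ Set.range P}, ∃ x : Fin (n + 1) → F, ∃ _ : x ≠ 0,
      span F {x} = Hsub P R.1 ⊓ ((P 0).submodule ⊔ (P 1).submodule) := by
    intro R
    have hrank : finrank F ↥(Hsub P R.1 ⊓ ((P 0).submodule ⊔ (P 1).submodule)) = 1 := by
      have h := Submodule.finrank_sup_add_finrank_inf_eq (Hsub P R.1)
        ((P 0).submodule ⊔ (P 1).submodule)
      rw [hHtop R, finrank_top, hVrank, hHrank R, hLrank] at h
      omega
    haveI : Nontrivial ↥(Hsub P R.1 ⊓ ((P 0).submodule ⊔ (P 1).submodule)) :=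
      Module.finrank_pos_iff.mp (by rw [hrank]; norm_num)
    obtain ⟨x, hx⟩ := exists_ne (0 : ↥(Hsub P R.1 ⊓ ((P 0).submodule ⊔ (P 1).submodule)))
    have hx0 : (x : Fin (n + 1) → F) ≠ 0 := by
      simpa [Submodule.coe_eq_zero] using hx
    refine ⟨x.1, hx0, ?_⟩
    apply Submodule.eq_of_le_of_finrank_le
    · exact Submodule.span_le.2 (Set.singleton_subset_iff.2 x.2)
    · rw [hrank, finrank_span_singleton hx0]
  choose xv hxv hxspan using key
  have gsub : ∀ R : {R // R ∈ K ∧ R ∉ Set.range P},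
      (Projectivization.mk F (xv R) (hxv R)).submodule
        = Hsub P R.1 ⊓ ((P 0).submodule ⊔ (P 1).submodule) := by
    intro R
    rw [Projectivization.submodule_mk]
    exact hxspan R
  have gne0 : ∀ R : {R // R ∈ K ∧ R ∉ Set.range P},
      Projectivization.mk F (xv R) (hxv R) ≠ P 0 := by
    intro R h
    apply hv0H R
    have hle : (P 0).submodule ≤ Hsub P R.1 := by
      rw [← h, gsub R]; exact inf_le_left
    exact hle (by rw [Projectivization.submodule_eq]; exact Submodule.mem_span_singleton_self _)
  have gne1 : ∀ R : {R // R ∈ K ∧ R ∉ Set.range P},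
      Projectivization.mk F (xv R) (hxv R) ≠ P 1 := by
    intro R h
    apply hv1H R
    have hle : (P 1).submodule ≤ Hsub P R.1 := by
      rw [← h, gsub R]; exact inf_le_left
    exact hle (by rw [Projectivization.submodule_eq]; exact Submodule.mem_span_singleton_self _)
  have gclosure : ∀ R : {R // R ∈ K ∧ R ∉ Set.range P},
      Projectivization.mk F (xv R) (hxv R) ∈ ptClosure K := by
    intro R T hT
    refine hT.2 (insert R.1 (P '' {i : Fin (n + 1) | 2 ≤ (i : ℕ)})) {P 0, P 1} ?_ ?_ _ ?_
    · refine Set.insert_subset_iff.mpr ⟨hT.1 R.2.1, ?_⟩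
      rintro p ⟨i, _, rfl⟩; exact hT.1 (hPK i)
    · rintro p (rfl | rfl) <;> exact hT.1 (hPK _)
    · rw [iSup_insert, iSup_image, iSup_insert, iSup_singleton, gsub R, hbsup]
      congr 1
      rw [Hsub, Eset, Submodule.span_insert, Projectivization.submodule_eq]
  have ginj : Function.Injective
      (fun R : {R // R ∈ K ∧ R ∉ Set.range P} => Projectivization.mk F (xv R) (hxv R)) := by
    intro R R' hgg
    by_contra hne
    have hvalne : R.1 ≠ R'.1 := fun h => hne (Subtype.ext h)
    have hmem : xv R ∈ Hsub P R.1 ⊓ ((P 0).submodule ⊔ (P 1).submodule) := by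
      rw [← hxspan R]; exact Submodule.mem_span_singleton_self _
    have heq : Hsub P R.1 ⊓ ((P 0).submodule ⊔ (P 1).submodule)
        = Hsub P R'.1 ⊓ ((P 0).submodule ⊔ (P 1).submodule) := by
      rw [← gsub R, ← gsub R']
      exact congrArg Projectivization.submodule hgg
    have hmem' := heq ▸ hmem
    have hxL : xv R ∈ (P 0).submodule ⊔ (P 1).submodule := hmem.2
    have hxH : xv R ∈ Hsub P R.1 := hmem.1
    have hdisj : Disjoint
        (span F ((fun i => (P i).rep) '' ({0, 1} : Set (Fin (n + 1)))))
        (span F ((fun i => (P i).rep) '' {i : Fin (n + 1) | 2 ≤ (i : ℕ)})) := by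
      apply hvind.disjoint_span_image
      rw [Set.disjoint_left]
      rintro i (rfl | rfl) hi
      · have : (2 : ℕ) ≤ ((0 : Fin (n + 1)) : ℕ) := hi
        simp at this
      · have : (2 : ℕ) ≤ ((1 : Fin (n + 1)) : ℕ) := hi
        rw [hval1] at this; omega
    have hxns : xv R ∉ span F ((fun i => (P i).rep) '' {i : Fin (n + 1) | 2 ≤ (i : ℕ)}) := by
      intro hmem2
      exact hxv R (Submodule.disjoint_def.mp hdisj _ (hLspan ▸ hxL) hmem2)
    have hxE' : xv R ∈ span F (insert R'.1.rep
        ((fun i => (P i).rep) '' {i : Fin (n + 1) | 2 ≤ (i : ℕ)})) := hmem'.1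
    have hrep' : R'.1.rep ∈ Hsub P R.1 := by
      have hexch := mem_span_insert_exchange hxE' hxns
      refine Submodule.span_le.2 ?_ hexch
      rintro y (rfl | hy)
      · exact hxH
      · exact Submodule.subset_span (Set.mem_insert_of_mem _ hy)
    have hR'r : R'.1 ∉ Set.range (Function.update P 0 R.1) := by
      intro hmem3
      rcases range_update_subset P 0 R.1 hmem3 with h | h
      · exact hvalne h.symm
      · exact R'.2.2 h
    have hinj3 : Function.Injective (Function.update (Function.update P 0 R.1) 1 R'.1) :=
      update_injective (update_injective hPinj R.2.2 0) hR'r 1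
    have hmem3 : ∀ i, Function.update (Function.update P 0 R.1) 1 R'.1 i ∈ K := by
      intro i
      rcases eq_or_ne i 1 with rfl | h1
      · rw [Function.update_self]; exact R'.2.1
      · rw [Function.update_of_ne h1]; exact hupdmem R 0 i
    have htop := arc_span_top hK _ hinj3 hmem3
    have hle : span F (Set.range fun i =>
        ((Function.update (Function.update P 0 R.1) 1 R'.1) i).rep) ≤ Hsub P R.1 := by
      rw [Submodule.span_le]
      rintro x ⟨i, rfl⟩
      rcases eq_or_ne i 1 with rfl | h1
      · simp only [Function.update_self]; exact hrep'
      rcases eq_or_ne i 0 with rfl | h0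
      · simp only [Function.update_of_ne h01, Function.update_self]
        exact Submodule.subset_span (Set.mem_insert _ _)
      · simp only [Function.update_of_ne h1, Function.update_of_ne h0]
        exact Submodule.subset_span (Set.mem_insert_of_mem _ ⟨i, h2le i h0 h1, rfl⟩)
    rw [htop] at hle
    have hHR : Hsub P R.1 = ⊤ := top_unique hle
    have hcontr : finrank F ↥(Hsub P R.1) = n + 1 := by rw [hHR, finrank_top, hVrank]
    rw [hHrank R] at hcontr
    omega
  refine ⟨⟨fun R => Projectivization.mk F (xv R) (hxv R), ginj,
    fun R => ⟨?_, gne0 R, gne1 R, gclosure R⟩⟩, ?_, by omega⟩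
  · rw [gsub R, hH1 R]
  · -- counting
    have hgmemS : ∀ R : {R // R ∈ K ∧ R ∉ Set.range P},
        Projectivization.mk F (xv R) (hxv R) ∈ {x | x ∈ ptClosure K ∧
          x.submodule ≤ (P 0).submodule ⊔ (P 1).submodule ∧ x ≠ P 0 ∧ x ≠ P 1} := by
      intro R
      exact ⟨gclosure R, by rw [gsub R]; exact inf_le_right, gne0 R, gne1 R⟩
    haveI : Finite ↥{x | x ∈ ptClosure K ∧
        x.submodule ≤ (P 0).submodule ⊔ (P 1).submodule ∧ x ≠ P 0 ∧ x ≠ P 1} :=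
      Subtype.finite
    have h1 : Nat.card {R // R ∈ K ∧ R ∉ Set.range P} ≤
        Nat.card ↥{x | x ∈ ptClosure K ∧
          x.submodule ≤ (P 0).submodule ⊔ (P 1).submodule ∧ x ≠ P 0 ∧ x ≠ P 1} :=
      Nat.card_le_card_of_injective (fun R => ⟨Projectivization.mk F (xv R) (hxv R), hgmemS R⟩)
        (fun a b hab => ginj (congrArg Subtype.val hab))
    have h2 : Nat.card {R // R ∈ K ∧ R ∉ Set.range P} = q - (n + 1) := by
      have e : {R // R ∈ K ∧ R ∉ Set.range P} ≃ ↥(K \ Set.range P) :=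
        Equiv.subtypeEquivRight (fun x => by simp [Set.mem_diff])
      have hr : (Set.range P).ncard = n + 1 := by
        rw [← Set.image_univ, Set.ncard_image_of_injective _ hPinj, Set.ncard_univ,
          Nat.card_eq_fintype_card, Fintype.card_fin]
      rw [Nat.card_congr e, Nat.card_coe_set_eq,
        Set.ncard_diff (Set.range_subset_iff.mpr hPK), hKcard, hr]
    rw [Nat.card_coe_set_eq] at h1
    rw [h2] at h1
    omega
end

section
/- Let K be an arc in PG(n,q) with n ≥ 3, or with n = 2 and q odd, with |K| = q. Then every point of PG(n,q) lies on at least one tangent line to K (a line meeting K in exactly one point). -/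
open scoped LinearAlgebra.Projectivization

variable {F : Type*} [Field F] {n : ℕ}

open Module Submodule Projectivization

section Helpers

variable {V : Type*} [AddCommGroup V] [Module F V]


lemma rep_mem_sub (x : ℙ F V) : x.rep ∈ x.submodule := by
  rw [Projectivization.submodule_eq]; exact Submodule.mem_span_singleton_self _

lemma sub_le_iff {x : ℙ F V} {L : Submodule F V} : x.submodule ≤ L ↔ x.rep ∈ L := by
  rw [Projectivization.submodule_eq, Submodule.span_singleton_le_iff_mem]

lemma finrank_biSup_le [FiniteDimensional F V] (S : Finset (ℙ F V)) :
    finrank F ↥(⨆ p ∈ S, p.submodule) ≤ S.card := by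
  classical
  induction S using Finset.induction with
  | empty => simp
  | @insert a S ha ih =>
    rw [Finset.iSup_insert, Finset.card_insert_of_notMem ha]
    calc finrank F ↥(a.submodule ⊔ ⨆ p ∈ S, p.submodule)
        ≤ finrank F ↥a.submodule + finrank F ↥(⨆ p ∈ S, p.submodule) := by
          have := Submodule.finrank_sup_add_finrank_inf_eq a.submodule (⨆ p ∈ S, p.submodule)
          omega
      _ ≤ 1 + S.card := by
          rw [a.finrank_submodule]; omega
      _ = S.card + 1 := by omega

lemma finrank_span_pair_eq_two {v w : V} (hv : v ≠ 0) (hw : w ∉ Submodule.span F {v}) :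
    finrank F ↥(Submodule.span F {v} ⊔ Submodule.span F {w}) = 2 := by
  have hw0 : w ≠ 0 := by rintro rfl; exact hw (Submodule.zero_mem _)
  have hinf : Submodule.span F {v} ⊓ Submodule.span F {w} = ⊥ := by
    rw [Submodule.eq_bot_iff]
    intro u hu
    rw [Submodule.mem_inf] at hu
    obtain ⟨hu1, hu2⟩ := hu
    rw [Submodule.mem_span_singleton] at hu1 hu2
    obtain ⟨a, rfl⟩ := hu1
    obtain ⟨b, hb⟩ := hu2
    rcases eq_or_ne b 0 with rfl | hb0
    · rw [zero_smul] at hb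
      rcases smul_eq_zero.mp hb.symm with rfl | rfl
      · simp
      · exact absurd rfl hv
    · exfalso
      apply hw
      rw [Submodule.mem_span_singleton]
      refine ⟨a / b, ?_⟩
      rw [div_eq_mul_inv, mul_comm, mul_smul, ← hb, smul_smul, inv_mul_cancel₀ hb0, one_smul]
  have := Submodule.finrank_sup_add_finrank_inf_eq (Submodule.span F {v}) (Submodule.span F {w})
  rw [hinf, finrank_span_singleton hv, finrank_span_singleton hw0] at this
  simpa using this

lemma finrank_sub_sup_eq_two {x y : ℙ F V} (hxy : x ≠ y) :
    finrank F ↥(x.submodule ⊔ y.submodule) = 2 := by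
  rw [x.submodule_eq, y.submodule_eq]
  apply finrank_span_pair_eq_two x.rep_nonzero
  intro h
  apply hxy
  apply Projectivization.submodule_injective
  rw [x.submodule_eq, y.submodule_eq]
  have hle : Submodule.span F {y.rep} ≤ Submodule.span F {x.rep} := by
    rwa [Submodule.span_singleton_le_iff_mem]
  refine (Submodule.eq_of_le_of_finrank_le hle ?_).symm
  rw [finrank_span_singleton x.rep_nonzero, finrank_span_singleton y.rep_nonzero]

lemma arc_finrank {F : Type*} [Field F] {n : ℕ} {K : Set (ℙ F (Fin (n + 1) → F))}
    (hK : IsArc n K) (hKfin : K.Finite) (S : Finset (ℙ F (Fin (n + 1) → F)))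
    (hSK : ↑S ⊆ K) (hScard : S.card ≤ n + 1) :
    finrank F ↥(⨆ p ∈ S, p.submodule) = S.card := by
  classical
  have hSsub : S ⊆ hKfin.toFinset := by
    intro p hp; rw [Set.Finite.mem_toFinset]; exact hSK hp
  have hKn : n + 1 ≤ hKfin.toFinset.card := by
    rw [← Set.ncard_eq_toFinset_card _ hKfin]; exact hK.1
  obtain ⟨T, hST, hTK, hTcard⟩ := Finset.exists_subsuperset_card_eq hSsub hScard hKn
  have htop : (⨆ p ∈ T, p.submodule) = ⊤ := by
    apply hK.2 T _ hTcard
    intro p hp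
    exact (Set.Finite.mem_toFinset hKfin).mp (hTK hp)
  have hT : finrank F ↥(⨆ p ∈ T, p.submodule) = n + 1 := by
    rw [htop, finrank_top, Module.finrank_fin_fun]
  have hsplit : (⨆ p ∈ T, p.submodule) = (⨆ p ∈ S, p.submodule) ⊔ ⨆ p ∈ T \ S, p.submodule := by
    rw [← Finset.iSup_union, Finset.union_sdiff_of_subset hST]
  have h1 : finrank F ↥(⨆ p ∈ S, p.submodule) ≤ S.card := finrank_biSup_le S
  have h2 : finrank F ↥(⨆ p ∈ T \ S, p.submodule) ≤ T.card - S.card := by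
    have := finrank_biSup_le (F := F) (T \ S)
    rwa [Finset.card_sdiff_of_subset hST] at this
  have h3 := Submodule.finrank_sup_add_finrank_inf_eq (⨆ p ∈ S, p.submodule)
    (⨆ p ∈ T \ S, p.submodule)
  rw [← hsplit] at h3
  have hSle : S.card ≤ T.card := Finset.card_le_card hST
  omega

lemma arc_card_le_finrank {F : Type*} [Field F] {n : ℕ} {K : Set (ℙ F (Fin (n + 1) → F))}
    (hK : IsArc n K) (hKfin : K.Finite) (S : Finset (ℙ F (Fin (n + 1) → F)))
    (hSK : ↑S ⊆ K) (hScard : S.card ≤ n + 1) {L : Submodule F (Fin (n + 1) → F)}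
    (hle : ∀ p ∈ S, p.submodule ≤ L) : S.card ≤ finrank F ↥L := by
  rw [← arc_finrank hK hKfin S hSK hScard]
  exact Submodule.finrank_mono (iSup₂_le hle)

lemma arc_three {F : Type*} [Field F] {n : ℕ} {K : Set (ℙ F (Fin (n + 1) → F))}
    (hK : IsArc n K) (hKfin : K.Finite) (hn : 2 ≤ n) {p1 p2 p3 : ℙ F (Fin (n + 1) → F)}
    (h1 : p1 ∈ K) (h2 : p2 ∈ K) (h3 : p3 ∈ K)
    (h12 : p1 ≠ p2) (h13 : p1 ≠ p3) (h23 : p2 ≠ p3) {L : Submodule F (Fin (n + 1) → F)}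
    (hL : finrank F ↥L ≤ 2) (hle1 : p1.submodule ≤ L) (hle2 : p2.submodule ≤ L)
    (hle3 : p3.submodule ≤ L) : False := by
  classical
  have hcard : ({p1, p2, p3} : Finset (ℙ F (Fin (n + 1) → F))).card = 3 := by
    rw [Finset.card_insert_of_notMem (by simp [h12, h13]),
      Finset.card_insert_of_notMem (by simp [h23]), Finset.card_singleton]
  have := arc_card_le_finrank hK hKfin {p1, p2, p3} (by
      intro p hp
      simp only [Finset.coe_insert, Set.mem_insert_iff, Finset.coe_singleton,
        Set.mem_singleton_iff] at hp
      rcases hp with rfl | rfl | rfl <;> assumption)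
    (by omega) (L := L) (by
      intro p hp
      simp only [Finset.mem_insert, Finset.mem_singleton] at hp
      rcases hp with rfl | rfl | rfl <;> assumption)
  omega

lemma arc_four {F : Type*} [Field F] {n : ℕ} {K : Set (ℙ F (Fin (n + 1) → F))}
    (hK : IsArc n K) (hKfin : K.Finite) (hn : 3 ≤ n) {p1 p2 p3 p4 : ℙ F (Fin (n + 1) → F)}
    (h1 : p1 ∈ K) (h2 : p2 ∈ K) (h3 : p3 ∈ K) (h4 : p4 ∈ K)
    (h12 : p1 ≠ p2) (h13 : p1 ≠ p3) (h14 : p1 ≠ p4) (h23 : p2 ≠ p3) (h24 : p2 ≠ p4)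
    (h34 : p3 ≠ p4) {L : Submodule F (Fin (n + 1) → F)}
    (hL : finrank F ↥L ≤ 3) (hle1 : p1.submodule ≤ L) (hle2 : p2.submodule ≤ L)
    (hle3 : p3.submodule ≤ L) (hle4 : p4.submodule ≤ L) : False := by
  classical
  have hcard : ({p1, p2, p3, p4} : Finset (ℙ F (Fin (n + 1) → F))).card = 4 := by
    rw [Finset.card_insert_of_notMem (by simp [h12, h13, h14]),
      Finset.card_insert_of_notMem (by simp [h23, h24]),
      Finset.card_insert_of_notMem (by simp [h34]), Finset.card_singleton]
  have := arc_card_le_finrank hK hKfin {p1, p2, p3, p4} (by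
      intro p hp
      simp only [Finset.coe_insert, Set.mem_insert_iff, Finset.coe_singleton,
        Set.mem_singleton_iff] at hp
      rcases hp with rfl | rfl | rfl | rfl <;> assumption)
    (by omega) (L := L) (by
      intro p hp
      simp only [Finset.mem_insert, Finset.mem_singleton] at hp
      rcases hp with rfl | rfl | rfl | rfl <;> assumption)
  omega

lemma ncard_biUnion_le' {α β : Type*} [Finite β] (S : Finset α) (f : α → Set β) :
    (⋃ a ∈ S, f a).ncard ≤ ∑ a ∈ S, (f a).ncard := by
  classical
  induction S using Finset.induction with
  | empty => simp
  | @insert a S ha ih =>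
    rw [Finset.set_biUnion_insert, Finset.sum_insert ha]
    exact le_trans (Set.ncard_union_le _ _) (by omega)

lemma ncard_submodule {F : Type*} [Field F] [Fintype F] {m : ℕ} (L : Submodule F (Fin m → F)) :
    (L : Set (Fin m → F)).ncard = Fintype.card F ^ finrank F ↥L := by
  haveI : Fintype ↥L := Fintype.ofFinite _
  rw [← Nat.card_coe_set_eq]
  have : Nat.card ↥(L : Set (Fin m → F)) = Nat.card ↥L :=
    Nat.card_congr (Equiv.subtypeEquivRight (by simp))
  rw [this, Nat.card_eq_fintype_card, card_eq_pow_finrank (K := F)]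

end Helpers

/-- Let `K` be an arc in `PG(n,q)` with `|K| = q`, where `n ≥ 3`, or `n = 2` and `q` odd.
Then every point of `PG(n,q)` lies on at least one tangent line to `K`, i.e. a line meeting
`K` in exactly one point. -/
theorem arc_tangent_through_every_point [Fintype F] {q : ℕ} (hq : Fintype.card F = q)
    (hn : 3 ≤ n ∨ (n = 2 ∧ Odd q)) (K : Set (ℙ F (Fin (n + 1) → F)))
    (hK : IsArc n K) (hKcard : K.ncard = q) :
    ∀ x : ℙ F (Fin (n + 1) → F), ∃ L : Submodule F (Fin (n + 1) → F),
      Module.finrank F ↥L = 2 ∧ x.submodule ≤ L ∧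
        ∃! p : ℙ F (Fin (n + 1) → F), p ∈ K ∧ p.submodule ≤ L := by
  classical
  intro x
  haveI : Finite (ℙ F (Fin (n + 1) → F)) := Quotient.finite _
  have hfin : K.Finite := Set.toFinite K
  have hn2 : 2 ≤ n := by rcases hn with h | ⟨h, _⟩ <;> omega
  have hq2 : 2 ≤ q := hq ▸ Fintype.one_lt_card
  have hqn : n + 1 ≤ q := hKcard ▸ hK.1
  by_cases hxK : x ∈ K
  · -- Case 1 : x ∈ K.  A counting argument gives a line through x avoiding K \ {x}.
    set v := x.rep with hv
    have hv0 : v ≠ 0 := x.rep_nonzero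
    set T : Finset (ℙ F (Fin (n + 1) → F)) := hfin.toFinset.erase x with hT
    set Bad : Set (Fin (n + 1) → F) :=
      ↑(Submodule.span F {v}) ∪
        ⋃ y ∈ T, (↑(x.submodule ⊔ y.submodule) : Set (Fin (n + 1) → F)) with hBad
    have hTcard : T.card = q - 1 := by
      rw [hT, Finset.card_erase_of_mem (hfin.mem_toFinset.mpr hxK),
        ← Set.ncard_eq_toFinset_card _ hfin, hKcard]
    have hBadlt : Bad.ncard < q ^ (n + 1) := by
      have h1 : (↑(Submodule.span F {v}) : Set (Fin (n + 1) → F)).ncard = q := by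
        rw [ncard_submodule, finrank_span_singleton hv0, pow_one, hq]
      have h2 : (⋃ y ∈ T, (↑(x.submodule ⊔ y.submodule) : Set (Fin (n + 1) → F))).ncard
          ≤ (q - 1) * q ^ 2 := by
        refine le_trans (ncard_biUnion_le' T _) ?_
        rw [← hTcard]
        refine le_trans (Finset.sum_le_card_nsmul T _ (q ^ 2) ?_) (by simp [mul_comm])
        intro y hy
        have hxy : x ≠ y := fun h => (Finset.ne_of_mem_erase hy) h.symm
        rw [ncard_submodule, finrank_sub_sup_eq_two hxy, hq]
      have hle : Bad.ncard ≤ q + (q - 1) * q ^ 2 := by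
        rw [hBad]
        refine le_trans (Set.ncard_union_le _ _) ?_
        omega
      have hlt : q + (q - 1) * q ^ 2 < q ^ 3 := by
        obtain ⟨r, rfl⟩ : ∃ r, q = r + 2 := ⟨q - 2, by omega⟩
        have : r + 2 - 1 = r + 1 := by omega
        rw [this]
        ring_nf
        nlinarith
      have hpow : q ^ 3 ≤ q ^ (n + 1) := Nat.pow_le_pow_right (by omega) (by omega)
      omega
    obtain ⟨w, hw⟩ : ∃ w, w ∉ Bad := by
      by_contra h'
      push_neg at h'
      have huniv : Bad = Set.univ := Set.eq_univ_of_forall h'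
      rw [huniv, Set.ncard_univ, Nat.card_eq_fintype_card] at hBadlt
      rw [Fintype.card_fun, Fintype.card_fin, hq] at hBadlt
      omega
    rw [hBad, Set.mem_union, not_or] at hw
    obtain ⟨hw1, hw2⟩ := hw
    have hw1 : w ∉ Submodule.span F {v} := hw1
    have hw2 : ∀ y ∈ T, w ∉ x.submodule ⊔ y.submodule := by
      intro y hy hmem
      exact hw2 (Set.mem_biUnion hy hmem)
    refine ⟨Submodule.span F {v} ⊔ Submodule.span F {w},
      finrank_span_pair_eq_two hv0 hw1, ?_, x, ⟨hxK, ?_⟩, ?_⟩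
    · rw [x.submodule_eq]; exact le_sup_left
    · rw [x.submodule_eq]; exact le_sup_left
    · rintro p ⟨hpK, hpL⟩
      by_contra hne
      have hpT : p ∈ T := Finset.mem_erase.mpr ⟨hne, hfin.mem_toFinset.mpr hpK⟩
      have hrep : p.rep ∈ Submodule.span F {v} ⊔ Submodule.span F {w} := sub_le_iff.mp hpL
      obtain ⟨a, ha, b, hb, hab⟩ := Submodule.mem_sup.mp hrep
      rw [Submodule.mem_span_singleton] at ha hb
      obtain ⟨c, rfl⟩ := ha
      obtain ⟨d, rfl⟩ := hb
      rcases eq_or_ne d 0 with rfl | hd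
      · -- p.rep ∈ span v, so p = x
        apply hne
        apply Projectivization.submodule_injective
        have hple : p.submodule ≤ x.submodule := by
          rw [sub_le_iff, x.submodule_eq]
          rw [Submodule.mem_span_singleton]
          exact ⟨c, by rw [← hab, zero_smul, add_zero]⟩
        exact Submodule.eq_of_le_of_finrank_le hple
          (by rw [x.finrank_submodule, p.finrank_submodule])
      · -- then w lies on the line xp, contradiction
        refine hw2 p hpT ?_
        have h1 : p.rep ∈ x.submodule ⊔ p.submodule :=
          Submodule.mem_sup_right (rep_mem_sub p)
        have h2 : v ∈ x.submodule ⊔ p.submodule :=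
          Submodule.mem_sup_left (rep_mem_sub x)
        have : w = d⁻¹ • (p.rep - c • v) := by
          rw [← hab]; rw [add_sub_cancel_left, smul_smul, inv_mul_cancel₀ hd, one_smul]
        rw [this]
        exact Submodule.smul_mem _ _ (Submodule.sub_mem _ h1 (Submodule.smul_mem _ _ h2))
  · -- Case 2 : x ∉ K.
    by_contra hno
    simp only [not_exists, not_and] at hno
    -- every line through x and a point of K contains a second point of K
    have key : ∀ y ∈ K, ∃ z ∈ K, z ≠ y ∧ z.submodule ≤ x.submodule ⊔ y.submodule := by
      intro y hy
      have hxy : x ≠ y := fun h => hxK (h ▸ hy)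
      have h2 := finrank_sub_sup_eq_two hxy
      have hnot := hno _ h2 le_sup_left
      by_contra hcon
      push_neg at hcon
      exact hnot ⟨y, ⟨hy, le_sup_right⟩, fun z hz => by
        by_contra hzy
        exact hcon z hz.1 hzy hz.2⟩
    rcases hn with hn3 | ⟨hn2', hodd⟩
    · -- n ≥ 3 : four points of K in a rank-3 subspace, contradiction
      obtain ⟨y1, hy1⟩ : K.Nonempty := by
        apply Set.nonempty_of_ncard_ne_zero; omega
      obtain ⟨y2, hy2K, hy21, hy2le⟩ := key y1 hy1
      obtain ⟨y3, hy3K, hy3ne⟩ : ∃ y3 ∈ K, y3 ∉ ({y1, y2} : Set _) := by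
        by_contra hsub
        push_neg at hsub
        have hle := Set.ncard_le_ncard hsub (Set.toFinite _)
        have : ({y1, y2} : Set (ℙ F (Fin (n + 1) → F))).ncard ≤ 2 :=
          le_trans (Set.ncard_insert_le _ _) (by rw [Set.ncard_singleton])
        omega
      simp only [Set.mem_insert_iff, Set.mem_singleton_iff, not_or] at hy3ne
      obtain ⟨hy31, hy32⟩ := hy3ne
      obtain ⟨y4, hy4K, hy43, hy4le⟩ := key y3 hy3K
      have hxy1 : x ≠ y1 := fun h => hxK (h ▸ hy1)
      have hxy3 : x ≠ y3 := fun h => hxK (h ▸ hy3K)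
      have hL1 : finrank F ↥(x.submodule ⊔ y1.submodule) = 2 := finrank_sub_sup_eq_two hxy1
      have hL2 : finrank F ↥(x.submodule ⊔ y3.submodule) = 2 := finrank_sub_sup_eq_two hxy3
      have hL12 : ∀ z ∈ K, z.submodule ≤ x.submodule ⊔ y1.submodule →
          z.submodule ≤ x.submodule ⊔ y3.submodule → False := by
        intro z hzK hz1 hz2
        have hxz : x ≠ z := fun h => hxK (h ▸ hzK)
        have e1 : x.submodule ⊔ z.submodule = x.submodule ⊔ y1.submodule :=
          Submodule.eq_of_le_of_finrank_le (sup_le le_sup_left hz1)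
            (by rw [hL1, finrank_sub_sup_eq_two hxz])
        have e2 : x.submodule ⊔ z.submodule = x.submodule ⊔ y3.submodule :=
          Submodule.eq_of_le_of_finrank_le (sup_le le_sup_left hz2)
            (by rw [hL2, finrank_sub_sup_eq_two hxz])
        have e3 : x.submodule ⊔ y3.submodule = x.submodule ⊔ y1.submodule := by
          rw [← e1, e2]
        exact arc_three hK hfin hn2 hy1 hy2K hy3K (Ne.symm hy21) (Ne.symm hy31)
          (Ne.symm hy32) hL1.le le_sup_right hy2le (e3 ▸ le_sup_right)
      have hy41 : y4 ≠ y1 := by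
        rintro rfl
        exact hL12 y4 hy4K le_sup_right hy4le
      have hy42 : y4 ≠ y2 := by
        rintro rfl
        exact hL12 y4 hy4K hy2le hy4le
      -- the span of the two lines has rank ≤ 3
      have hMrank : finrank F ↥((x.submodule ⊔ y1.submodule) ⊔ (x.submodule ⊔ y3.submodule)) ≤ 3 := by
        have hsum := Submodule.finrank_sup_add_finrank_inf_eq
          (x.submodule ⊔ y1.submodule) (x.submodule ⊔ y3.submodule)
        have hinf : 1 ≤ finrank F ↥((x.submodule ⊔ y1.submodule) ⊓ (x.submodule ⊔ y3.submodule)) := by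
          have hxle : x.submodule ≤ (x.submodule ⊔ y1.submodule) ⊓ (x.submodule ⊔ y3.submodule) :=
            le_inf le_sup_left le_sup_left
          have := Submodule.finrank_mono hxle
          rw [x.finrank_submodule] at this
          omega
        rw [hL1, hL2] at hsum
        omega
      exact arc_four hK hfin hn3 hy1 hy2K hy3K hy4K (Ne.symm hy21) (Ne.symm hy31)
        (Ne.symm hy41) (Ne.symm hy32) (Ne.symm hy42) (Ne.symm hy43) hMrank
        (le_trans le_sup_right (le_sup_left : x.submodule ⊔ y1.submodule ≤ _))
        (le_trans hy2le le_sup_left)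
        (le_trans le_sup_right le_sup_right)
        (le_trans hy4le le_sup_right)
    · -- n = 2 and q odd : fixed-point-free involution on K, contradiction with parity
      haveI : Fintype ↥K := hfin.fintype
      have hcardK : Fintype.card ↥K = q := by
        rw [← Nat.card_eq_fintype_card, Nat.card_coe_set_eq, hKcard]
      have key' : ∀ y : ↥K, ∃ z : ↥K, (z : ℙ F (Fin (n + 1) → F)) ≠ (y : ℙ F (Fin (n + 1) → F)) ∧
          (z : ℙ F (Fin (n + 1) → F)).submodule ≤
            x.submodule ⊔ (y : ℙ F (Fin (n + 1) → F)).submodule := by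
        intro y
        obtain ⟨z, hzK, h1, h2⟩ := key y y.2
        exact ⟨⟨z, hzK⟩, h1, h2⟩
      choose f hf1 hf2 using key'
      have hxmem : ∀ y : ↥K, x ≠ (y : ℙ F (Fin (n + 1) → F)) := fun y h => hxK (h ▸ y.2)
      have hinv : ∀ y, f (f y) = y := by
        intro y
        have hLy : finrank F ↥(x.submodule ⊔ (y : ℙ F (Fin (n + 1) → F)).submodule) = 2 :=
          finrank_sub_sup_eq_two (hxmem y)
        have heq : x.submodule ⊔ (f y : ℙ F (Fin (n + 1) → F)).submodule =
            x.submodule ⊔ (y : ℙ F (Fin (n + 1) → F)).submodule :=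
          Submodule.eq_of_le_of_finrank_le (sup_le le_sup_left (hf2 y))
            (by rw [hLy, finrank_sub_sup_eq_two (hxmem (f y))])
        have h3 : (f (f y) : ℙ F (Fin (n + 1) → F)).submodule ≤
            x.submodule ⊔ (y : ℙ F (Fin (n + 1) → F)).submodule := heq ▸ hf2 (f y)
        by_contra hne
        have hne' : (f (f y) : ℙ F (Fin (n + 1) → F)) ≠ (y : ℙ F (Fin (n + 1) → F)) :=
          fun h => hne (Subtype.coe_injective h)
        exact arc_three hK hfin hn2 y.2 (f y).2 (f (f y)).2 (Ne.symm (hf1 y))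
          (Ne.symm hne') (Ne.symm (hf1 (f y))) hLy.le le_sup_right (hf2 y) h3
      haveI : Fact (Nat.Prime 2) := ⟨Nat.prime_two⟩
      let g : Function.End ↥K := f
      have hpow : g ^ (2 : ℕ) ^ (1 : ℕ) = 1 := by
        rw [pow_one, sq]
        funext y
        exact hinv y
      have hmod := Equiv.Perm.card_fixedPoints_modEq (f := g) hpow
      haveI : IsEmpty ↥(Function.fixedPoints g) := by
        refine ⟨fun ⟨y, hy⟩ => ?_⟩
        exact hf1 y (congrArg Subtype.val hy)
      rw [hcardK] at hmod
      simp only [Fintype.card_eq_zero] at hmod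
      obtain ⟨k, hk⟩ := hodd
      have := hmod
      unfold Nat.ModEq at this
      omega
end
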